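/- Let $T$ be a rooted tree and $B \geq 1$ a block size. Define a layout as a function $L : V(T) \to \{0,1,\dots,|V(T)|\}$ with at most $B$ vertices mapped to each block, where block $0$ may hold at most $k$ vertices; the cost of a root-to-leaf path $P$ is the number of distinct nonzero blocks among $\{L(v) : v \in P\}$, and $c(T,k)$ is the minimum over layouts of the maximum path cost. Then $c(T,k)$ is non-increasing in $k$, and for any $k_1, k_2 \in \{0,\dots,B\}$, $|c(T,k_1) - c(T,k_2)| \leq 1$. -/

import Mathlib

/-! Model of rooted trees, memory layouts into blocks, and the
worst-case root-to-leaf I/O cost `layoutCost t B k` (minimum over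
layouts with at most `B` vertices per nonzero block and at most `k`
vertices in the free block `0`, of the maximum over root-to-leaf paths
of the number of distinct nonzero blocks on the path).
Vertices are addressed by their list of child indices from the root. -/

inductive RTree : Type where
  | node : List RTree → RTree

namespace RTree

mutual
  /-- Addresses of all vertices of the tree. The root has address `[]`. -/
  def verts : RTree → List (List ℕ)
    | .node ts => [] :: vertsAux 0 ts
  def vertsAux : ℕ → List RTree → List (List ℕ)
    | _, [] => []
    | i, t :: ts => (t.verts.map (i :: ·)) ++ vertsAux (i + 1) ts
end

mutual
  /-- Addresses of all leaves; a root-to-leaf path consists of all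
  prefixes (`List.inits`) of a leaf address. -/
  def paths : RTree → List (List ℕ)
    | .node [] => [[]]
    | .node (t :: ts) => pathsAux 0 (t :: ts)
  def pathsAux : ℕ → List RTree → List (List ℕ)
    | _, [] => []
    | i, t :: ts => (t.paths.map (i :: ·)) ++ pathsAux (i + 1) ts
end

end RTree

/-- Number of vertices of `t` that layout `L` assigns to block `b`. -/
def blockCount (t : RTree) (L : List ℕ → ℕ) (b : ℕ) : ℕ :=
  (t.verts.filter (fun v => L v = b)).length

/-- `L` is a valid layout of `t` with block size `B` and at most `k`
vertices in the free block `0`. -/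
def okLayout (t : RTree) (B k : ℕ) (L : List ℕ → ℕ) : Prop :=
  (∀ v ∈ t.verts, L v ≤ t.verts.length) ∧
  (∀ b : ℕ, b ≠ 0 → blockCount t L b ≤ B) ∧
  blockCount t L 0 ≤ k

/-- Cost of the root-to-leaf path ending at leaf address `p`: the number
of distinct nonzero blocks among the vertices on the path. -/
def pathCost (L : List ℕ → ℕ) (p : List ℕ) : ℕ :=
  (((p.inits.map L).dedup).filter (fun b => b ≠ 0)).length

/-- Worst-case cost of layout `L` on tree `t`. -/
def maxCost (t : RTree) (L : List ℕ → ℕ) : ℕ :=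
  (t.paths.map (pathCost L)).foldr max 0

/-- `c(T,k)`: worst-case optimal I/O cost of `t` with block size `B` and
`k` free slots in block `0`. -/
noncomputable def layoutCost (t : RTree) (B k : ℕ) : ℕ :=
  sInf {m : ℕ | ∃ L : List ℕ → ℕ, okLayout t B k L ∧ maxCost t L = m}

/-! Monotonicity in `k` is immediate, since a layout with `k` free slots is also one with
`k' ≥ k` free slots. For the gap, take an optimal layout with `B` free slots: the `n` vertices
leave one of the blocks `0, …, n` empty, and swapping that block with block `0` yields a layout
with no free slots. A relabelling of blocks creates at most one new nonzero block on each path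
(the image of block `0`), so the cost grows by at most one. -/

namespace RTree

theorem exists_head_of_mem_vertsAux {i : ℕ} {ts : List RTree} {v : List ℕ}
    (hv : v ∈ vertsAux i ts) : ∃ j w, i ≤ j ∧ v = j :: w := by
  induction ts generalizing i with
  | nil => simp [vertsAux] at hv
  | cons t ts ih =>
    rw [vertsAux, List.mem_append, List.mem_map] at hv
    rcases hv with ⟨w, -, rfl⟩ | hv
    · exact ⟨i, w, le_rfl, rfl⟩
    · obtain ⟨j, w, hj, rfl⟩ := ih hv
      exact ⟨j, w, by omega, rfl⟩

mutual
theorem nodup_verts : (t : RTree) → t.verts.Nodup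
  | .node ts => by
    rw [verts, List.nodup_cons]
    refine ⟨fun h => ?_, nodup_vertsAux 0 ts⟩
    obtain ⟨_, _, _, h⟩ := exists_head_of_mem_vertsAux h
    cases h
theorem nodup_vertsAux : (i : ℕ) → (ts : List RTree) → (vertsAux i ts).Nodup
  | _, [] => List.nodup_nil
  | i, t :: ts => by
    rw [vertsAux, List.nodup_append]
    refine ⟨(nodup_verts t).map List.cons_injective, nodup_vertsAux (i + 1) ts, ?_⟩
    rintro _ hv v hv' rfl
    obtain ⟨w, -, rfl⟩ := List.mem_map.mp hv
    obtain ⟨j, w', hj, h⟩ := exists_head_of_mem_vertsAux hv'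
    rw [List.cons.injEq] at h
    omega
end

end RTree

theorem List.length_filter_idxOf_le_one {α : Type*} [BEq α] [LawfulBEq α] {l : List α}
    (hl : l.Nodup) {f : ℕ → ℕ} (hf : f.Injective) (b : ℕ) :
    (l.filter (fun v => f (l.idxOf v) = b)).length ≤ 1 := by
  classical
  rw [← List.toFinset_card_of_nodup (hl.filter _), Finset.card_le_one]
  simp only [List.mem_toFinset, List.mem_filter, decide_eq_true_eq]
  rintro x ⟨hx, rfl⟩ y ⟨-, hxy⟩
  exact (List.idxOf_inj hx).mp (hf hxy.symm)

theorem List.length_filter_dedup_ne_eq_card_erase (l : List ℕ) (a : ℕ) :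
    (l.dedup.filter (fun b => b ≠ a)).length = (l.toFinset.erase a).card := by
  rw [← List.toFinset_card_of_nodup (l.nodup_dedup.filter _), List.toFinset_filter,
    ← Finset.filter_ne']
  congr 1
  ext; simp

section Layout

variable {t : RTree} {B k : ℕ} {L : List ℕ → ℕ}

theorem okLayout.mono {k' : ℕ} (h : okLayout t B k L) (hk : k ≤ k') : okLayout t B k' L :=
  ⟨h.1, h.2.1, h.2.2.trans hk⟩

theorem blockCount_eq_zero_iff {b : ℕ} : blockCount t L b = 0 ↔ ∀ v ∈ t.verts, L v ≠ b := by
  simp [blockCount]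

theorem blockCount_perm_comp (σ : Equiv.Perm ℕ) (b : ℕ) :
    blockCount t (σ ∘ L) b = blockCount t L (σ.symm b) := by
  simp only [blockCount, Function.comp_apply, ← Equiv.eq_symm_apply]

theorem exists_empty_block : ∃ b ≤ t.verts.length, blockCount t L b = 0 := by
  classical
  have hcard : (t.verts.map L).toFinset.card < (Finset.range (t.verts.length + 1)).card := by
    simpa [Nat.lt_succ_iff] using (t.verts.map L).toFinset_card_le
  obtain ⟨b, hb, hb_unused⟩ := Finset.exists_mem_notMem_of_card_lt_card hcard
  refine ⟨b, Nat.lt_succ_iff.mp (Finset.mem_range.mp hb),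
    blockCount_eq_zero_iff.mpr fun v hv hvb => hb_unused ?_⟩
  exact List.mem_toFinset.mpr (List.mem_map.mpr ⟨v, hv, hvb⟩)

theorem exists_okLayout_zero (hB : 1 ≤ B) : ∃ L, okLayout t B 0 L :=
  ⟨fun v => t.verts.idxOf v + 1, fun _ hv => List.idxOf_lt_length_iff.mpr hv,
    fun b _ => (List.length_filter_idxOf_le_one t.nodup_verts Nat.succ_injective b).trans hB,
    by simp [blockCount]⟩

theorem okLayout_swap_zero {b : ℕ} (hL : okLayout t B B L)
    (hbn : b ≤ t.verts.length) (hb : blockCount t L b = 0) :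
    okLayout t B 0 (Equiv.swap 0 b ∘ L) := by
  have hLb := blockCount_eq_zero_iff.mp hb
  refine ⟨fun v hv => ?_, fun c hc => ?_, ?_⟩
  · rw [Function.comp_apply, Equiv.swap_apply_def]
    split_ifs
    · exact hbn
    · exact absurd ‹L v = b› (hLb v hv)
    · exact hL.1 v hv
  · rw [blockCount_perm_comp, Equiv.symm_swap, Equiv.swap_apply_def]
    split_ifs with hcb
    · exact absurd ‹c = 0› hc
    · exact hL.2.2
    · exact hL.2.1 c hc
  · rw [blockCount_perm_comp, Equiv.symm_swap, Equiv.swap_apply_left, hb]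

theorem pathCost_eq_card (p : List ℕ) :
    pathCost L p = ((p.inits.map L).toFinset.erase 0).card :=
  List.length_filter_dedup_ne_eq_card_erase _ 0

theorem pathCost_comp_le (g : ℕ → ℕ) (p : List ℕ) : pathCost (g ∘ L) p ≤ pathCost L p + 1 := by
  classical
  rw [pathCost_eq_card, pathCost_eq_card, ← List.map_map]
  have himage : ((p.inits.map L).map g).toFinset = (p.inits.map L).toFinset.image g := by
    ext; simp
  rw [himage]
  calc _ ≤ ((p.inits.map L).toFinset.image g).card := Finset.card_erase_le
    _ ≤ (p.inits.map L).toFinset.card := Finset.card_image_le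
    _ ≤ _ := by
      have := Finset.pred_card_le_card_erase (s := (p.inits.map L).toFinset) (a := 0)
      omega

theorem maxCost_le_iff {m : ℕ} : maxCost t L ≤ m ↔ ∀ p ∈ t.paths, pathCost L p ≤ m := by
  unfold maxCost
  induction t.paths <;> simp [*]

theorem maxCost_comp_le (g : ℕ → ℕ) : maxCost t (g ∘ L) ≤ maxCost t L + 1 :=
  maxCost_le_iff.mpr fun p hp =>
    (pathCost_comp_le g p).trans (Nat.add_le_add_right (maxCost_le_iff.mp le_rfl p hp) 1)

theorem layoutCost_le (h : okLayout t B k L) : layoutCost t B k ≤ maxCost t L :=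
  Nat.sInf_le ⟨L, h, rfl⟩

-- `sInf ∅ = 0` in `ℕ`, so the infimum is attained only once some valid layout exists;
-- with `B = 0` there is none for small `k`.
theorem exists_maxCost_eq_layoutCost (hB : 1 ≤ B) (k : ℕ) :
    ∃ L, okLayout t B k L ∧ maxCost t L = layoutCost t B k := by
  obtain ⟨L, hL⟩ := exists_okLayout_zero (t := t) hB
  have hne : {m | ∃ L, okLayout t B k L ∧ maxCost t L = m}.Nonempty :=
    ⟨_, L, hL.mono k.zero_le, rfl⟩
  exact Nat.sInf_mem hne

theorem layoutCost_antitone (hB : 1 ≤ B) : Antitone (layoutCost t B) := fun k _ hk => by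
  obtain ⟨L, hL, hcost⟩ := exists_maxCost_eq_layoutCost hB k
  exact hcost ▸ layoutCost_le (hL.mono hk)

theorem layoutCost_zero_le_add_one (hB : 1 ≤ B) : layoutCost t B 0 ≤ layoutCost t B B + 1 := by
  obtain ⟨L, hL, hcost⟩ := exists_maxCost_eq_layoutCost hB B
  obtain ⟨b, hbn, hb⟩ := exists_empty_block (L := L)
  calc layoutCost t B 0 ≤ maxCost t (Equiv.swap 0 b ∘ L) :=
        layoutCost_le (okLayout_swap_zero hL hbn hb)
    _ ≤ maxCost t L + 1 := maxCost_comp_le _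
    _ = layoutCost t B B + 1 := by rw [hcost]

end Layout

/-- `c(T,k)` is non-increasing in `k`, and for `k₁, k₂ ∈ {0,…,B}` the
values `c(T,k₁)` and `c(T,k₂)` differ by at most `1`. -/
theorem stmt5 (t : RTree) (B : ℕ) (hB : 1 ≤ B) :
    (∀ k₁ k₂ : ℕ, k₁ ≤ k₂ → layoutCost t B k₂ ≤ layoutCost t B k₁) ∧
    (∀ k₁ k₂ : ℕ, k₁ ≤ B → k₂ ≤ B →
      |(layoutCost t B k₁ : ℤ) - (layoutCost t B k₂ : ℤ)| ≤ 1) := by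
  have hanti := layoutCost_antitone (t := t) hB
  refine ⟨fun _ _ hk => hanti hk, fun k₁ k₂ hk₁ hk₂ => ?_⟩
  have hB₁ := hanti hk₁
  have hB₂ := hanti hk₂
  have h₁0 := hanti k₁.zero_le
  have h₂0 := hanti k₂.zero_le
  have h0B := layoutCost_zero_le_add_one (t := t) hB
  rw [abs_sub_le_iff]
  omega
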